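/- Let F_{S1} := x0^9 + (x1^3 − x2^3)·(x2^3 − x3^3)·(x3^3 − x1^3) ∈ ℂ[x0, x1, x2, x3]. For every nonzero vector (a0, a1, a2, a3) ∈ ℂ⁴, the following are equivalent: (i) F_{S1} and all four of its partial derivatives ∂F_{S1}/∂x0, …, ∂F_{S1}/∂x3 vanish at (a0, a1, a2, a3); (ii) a0 = 0 and either (a1^3 = a2^3 and a2^3 = a3^3), or (a1 = 0 and a2 = 0), or (a2 = 0 and a3 = 0), or (a1 = 0 and a3 = 0). (Equivalently, the singular locus of the projective surface S1 = {F_{S1} = 0} ⊂ ℙ³_ℂ consists of exactly the 12 points [0:1:0:0], [0:0:1:0], [0:0:0:1], and the nine points [0:a:b:1] with a^3 = b^3 = 1.) -/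
import Mathlib


open MvPolynomial

/-- The homogeneous degree-9 polynomial defining the surface `S1 ⊂ ℙ³_ℂ`. -/
noncomputable def FS1 : MvPolynomial (Fin 4) ℂ :=
  X 0 ^ 9 + (X 1 ^ 3 - X 2 ^ 3) * (X 2 ^ 3 - X 3 ^ 3) * (X 3 ^ 3 - X 1 ^ 3)

/-- Description of the singular locus of the surface `S1 = {F_{S1} = 0} ⊂ ℙ³_ℂ`:
for a nonzero vector `a ∈ ℂ⁴`, `F_{S1}` and all its partial derivatives vanish at `a`
iff `a 0 = 0` and either `a1³ = a2³ = a3³` or two of `a1, a2, a3` vanish. -/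
theorem stmt_2 (a : Fin 4 → ℂ) (ha : a ≠ 0) :
    (eval a FS1 = 0 ∧ ∀ i : Fin 4, eval a (pderiv i FS1) = 0) ↔
      (a 0 = 0 ∧ ((a 1 ^ 3 = a 2 ^ 3 ∧ a 2 ^ 3 = a 3 ^ 3) ∨ (a 1 = 0 ∧ a 2 = 0) ∨
        (a 2 = 0 ∧ a 3 = 0) ∨ (a 1 = 0 ∧ a 3 = 0))) := by
  have eF : eval a FS1 = a 0 ^ 9 +
      (a 1 ^ 3 - a 2 ^ 3) * (a 2 ^ 3 - a 3 ^ 3) * (a 3 ^ 3 - a 1 ^ 3) := by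
    simp [FS1]
  have e0 : eval a (pderiv 0 FS1) = 9 * a 0 ^ 8 := by simp [FS1, pderiv_X]
  have e1 : eval a (pderiv 1 FS1) =
      3 * a 1 ^ 2 * ((a 2 ^ 3 - a 3 ^ 3) * (a 2 ^ 3 + a 3 ^ 3 - 2 * a 1 ^ 3)) := by
    simp [FS1, pderiv_X]; ring
  have e2 : eval a (pderiv 2 FS1) =
      3 * a 2 ^ 2 * ((a 3 ^ 3 - a 1 ^ 3) * (a 3 ^ 3 + a 1 ^ 3 - 2 * a 2 ^ 3)) := by
    simp [FS1, pderiv_X]; ring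
  have e3 : eval a (pderiv 3 FS1) =
      3 * a 3 ^ 2 * ((a 1 ^ 3 - a 2 ^ 3) * (a 1 ^ 3 + a 2 ^ 3 - 2 * a 3 ^ 3)) := by
    simp [FS1, pderiv_X]; ring
  set p := a 1 ^ 3 with hp
  set q := a 2 ^ 3 with hq
  set r := a 3 ^ 3 with hr
  have cube_iff : ∀ x : ℂ, x ^ 3 = 0 ↔ x = 0 := fun x =>
    pow_eq_zero_iff (n := 3) (by norm_num)
  constructor
  · rintro ⟨hF, hD⟩
    have h0 := hD 0; rw [e0] at h0
    have ha0 : a 0 = 0 := by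
      rcases mul_eq_zero.mp h0 with h | h
      · exact absurd h (by norm_num)
      · exact pow_eq_zero_iff (by norm_num) |>.mp h
    refine ⟨ha0, ?_⟩
    have hG : (p - q) * (q - r) * (r - p) = 0 := by
      rw [eF, ha0] at hF; linear_combination hF
    have h1 := hD 1; rw [e1] at h1
    have h2 := hD 2; rw [e2] at h2
    have h3 := hD 3; rw [e3] at h3
    have sq_zero : ∀ x : ℂ, x ^ 2 = 0 → x = 0 := fun x hx =>
      pow_eq_zero_iff two_ne_zero |>.mp hx
    have f1 : a 1 = 0 ∨ (q - r) * (q + r - 2 * p) = 0 := by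
      rcases mul_eq_zero.mp h1 with h | h
      · rcases mul_eq_zero.mp h with h | h
        · exact absurd h (by norm_num)
        · exact Or.inl (sq_zero _ h)
      · exact Or.inr h
    have f2 : a 2 = 0 ∨ (r - p) * (r + p - 2 * q) = 0 := by
      rcases mul_eq_zero.mp h2 with h | h
      · rcases mul_eq_zero.mp h with h | h
        · exact absurd h (by norm_num)
        · exact Or.inl (sq_zero _ h)
      · exact Or.inr h
    have f3 : a 3 = 0 ∨ (p - q) * (p + q - 2 * r) = 0 := by
      rcases mul_eq_zero.mp h3 with h | h
      · rcases mul_eq_zero.mp h with h | h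
        · exact absurd h (by norm_num)
        · exact Or.inl (sq_zero _ h)
      · exact Or.inr h
    rcases mul_eq_zero.mp hG with hG' | hrp
    · rcases mul_eq_zero.mp hG' with hpq | hqr
      · -- p = q
        rcases f2 with h | h
        · -- a2 = 0, hence q = 0, hence p = 0, hence a1 = 0
          have hq0 : q = 0 := by rw [hq, h]; ring
          have hp0 : p = 0 := by linear_combination hpq + hq0
          exact Or.inr (Or.inl ⟨(cube_iff _).mp hp0, h⟩)
        · have h' : (r - q) ^ 2 = 0 := by linear_combination h + (p - q) * hpq
          have := sq_zero _ h'
          exact Or.inl ⟨sub_eq_zero.mp hpq, (sub_eq_zero.mp this).symm⟩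
      · -- q = r
        rcases f2 with h2' | h2'
        · rcases f3 with h3' | h3'
          · exact Or.inr (Or.inr (Or.inl ⟨h2', h3'⟩))
          · have h' : (p - q) ^ 2 = 0 := by linear_combination h3' - 2 * (p - q) * hqr
            exact Or.inl ⟨sub_eq_zero.mp (sq_zero _ h'), sub_eq_zero.mp hqr⟩
        · have h' : (p - q) ^ 2 = 0 := by linear_combination -h2' + (q - r) * hqr
          exact Or.inl ⟨sub_eq_zero.mp (sq_zero _ h'), sub_eq_zero.mp hqr⟩
    · -- r = p
      rcases f1 with h1' | h1'
      · rcases f3 with h3' | h3'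
        · exact Or.inr (Or.inr (Or.inr ⟨h1', h3'⟩))
        · have h' : (p - q) ^ 2 = 0 := by linear_combination -h3' - 2 * (p - q) * hrp
          have hpq := sub_eq_zero.mp (sq_zero _ h')
          refine Or.inl ⟨hpq, ?_⟩
          have : q - r = 0 := by linear_combination -(sub_eq_zero.mpr hpq) - hrp
          exact sub_eq_zero.mp this
      · have h' : (p - q) ^ 2 = 0 := by linear_combination h1' + (r - p) * hrp
        have hpq := sub_eq_zero.mp (sq_zero _ h')
        refine Or.inl ⟨hpq, ?_⟩
        have : q - r = 0 := by linear_combination -(sub_eq_zero.mpr hpq) - hrp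
        exact sub_eq_zero.mp this
  · rintro ⟨h0, hcase⟩
    constructor
    · rw [eF, h0]
      rcases hcase with ⟨h12, h23⟩ | ⟨h1, h2⟩ | ⟨h2, h3⟩ | ⟨h1, h3⟩
      · linear_combination ((q - r) * (r - p)) * h12
      · rw [hp, hq, h1, h2]; ring
      · rw [hq, hr, h2, h3]; ring
      · rw [hp, hr, h1, h3]; ring
    · intro i
      fin_cases i
      · show eval a (pderiv 0 FS1) = 0
        rw [e0, h0]; ring
      · show eval a (pderiv 1 FS1) = 0
        rw [e1]
        rcases hcase with ⟨h12, h23⟩ | ⟨h1, h2⟩ | ⟨h2, h3⟩ | ⟨h1, h3⟩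
        · linear_combination (3 * a 1 ^ 2 * (q + r - 2 * p)) * h23
        · rw [h1]; ring
        · rw [hq, hr, h2, h3]; ring
        · rw [h1]; ring
      · show eval a (pderiv 2 FS1) = 0
        rw [e2]
        rcases hcase with ⟨h12, h23⟩ | ⟨h1, h2⟩ | ⟨h2, h3⟩ | ⟨h1, h3⟩
        · linear_combination (-3 * a 2 ^ 2 * (r + p - 2 * q)) * h12 +
            (-3 * a 2 ^ 2 * (r + p - 2 * q)) * h23
        · rw [h2]; ring
        · rw [h2]; ring
        · rw [hp, hr, h1, h3]; ring
      · show eval a (pderiv 3 FS1) = 0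
        rw [e3]
        rcases hcase with ⟨h12, h23⟩ | ⟨h1, h2⟩ | ⟨h2, h3⟩ | ⟨h1, h3⟩
        · linear_combination (3 * a 3 ^ 2 * (p + q - 2 * r)) * h12
        · rw [hp, hq, h1, h2]; ring
        · rw [h3]; ring
        · rw [h3]; ring
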